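/- Let n ≥ 2 be an integer. For every real ε > 0 there is a constant C > 0, depending only on n and ε, such that for every vector a = (a_1, …, a_n) of positive integers, every integer h ≥ 2, and every real D ≥ 1: Σ_{d > D} U_d(a, h) ≤ C · h^n · (h·𝔥(a))^ε, where the sum is over integers d with D < d ≤ n·h·𝔥(a) (note U_d(a, h) = 0 for d > n·h·𝔥(a)). -/

import Mathlib

/-- The height of an integer vector: `𝔥(x) = max |x_i|`. -/
def vecHeight {n : ℕ} (x : Fin n → ℤ) : ℕ :=
  Finset.univ.sup fun i => (x i).natAbs

/-- `U_d(a, h)`: the number of vectors `x ∈ ℤⁿ` with positive components and height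
at most `h` for which `d ∣ a·x`. -/
noncomputable def Ucount {n : ℕ} (a : Fin n → ℤ) (h d : ℕ) : ℕ :=
  Nat.card {x : Fin n → ℤ //
    (∀ i, 0 < x i) ∧ vecHeight x ≤ h ∧ (d : ℤ) ∣ ∑ i, a i * x i}

/-!
Exchanging the two summations, the left-hand side counts pairs `(x, d)` with `x ∈ [1, h]ⁿ` and
`d ∣ a·x`, so it is at most `hⁿ` times the largest number of divisors of an integer in
`[1, n·h·𝔥(a)]`. The divisor bound `τ(m) ≤ C_ε m^ε` comes from
`τ(m) / m^ε = ∏_{p^e ∥ m} (e + 1) / p^{εe}`: a factor is at most `1` when `p^ε ≥ 2`, and at most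
`1 + 1/(ε log 2)` for each of the fewer than `2^{1/ε}` primes with `p^ε < 2`.
-/

open Finset Real

lemma add_one_le_mul_two_rpow {ε : ℝ} (hε : 0 < ε) (e : ℕ) :
    (e + 1 : ℝ) ≤ (1 + (ε * log 2)⁻¹) * 2 ^ (ε * e) := by
  set c := ε * log 2
  have hc : 0 < c := mul_pos hε (log_pos one_lt_two)
  have hexp : 1 + c * e ≤ (2 : ℝ) ^ (ε * e) := by
    rw [rpow_def_of_pos two_pos]
    linarith [add_one_le_exp (log 2 * (ε * e))]
  calc (e + 1 : ℝ) ≤ 1 + c * e + c⁻¹ + e := by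
        linarith [mul_nonneg hc.le (Nat.cast_nonneg (α := ℝ) e), inv_pos.2 hc]
    _ = (1 + c⁻¹) * (1 + c * e) := by field_simp; ring
    _ ≤ (1 + c⁻¹) * 2 ^ (ε * e) := by gcongr

lemma add_one_le_mul_rpow {ε x : ℝ} (hε : 0 < ε) (hx : 2 ≤ x) (e : ℕ) :
    (e + 1 : ℝ) ≤ (if x ^ ε < 2 then 1 + (ε * log 2)⁻¹ else 1) * x ^ (ε * e) := by
  split_ifs with hsmall
  · refine (add_one_le_mul_two_rpow hε e).trans ?_
    gcongr
  · rw [one_mul, rpow_mul (by linarith), rpow_natCast]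
    calc (e + 1 : ℝ) ≤ 2 ^ e := by exact_mod_cast e.lt_two_pow_self
      _ ≤ (x ^ ε) ^ e := by gcongr; exact not_lt.1 hsmall

lemma rpow_eq_prod_primeFactors {m : ℕ} (hm : m ≠ 0) (ε : ℝ) :
    (m : ℝ) ^ ε = ∏ p ∈ m.primeFactors, (p : ℝ) ^ (ε * m.factorization p) := by
  conv_lhs => rw [← Nat.prod_factorization_pow_eq_self hm]
  rw [Finsupp.prod, Nat.support_factorization]
  push_cast
  rw [← Real.finsetProd_rpow _ _ fun p _ => by positivity]
  refine prod_congr rfl fun p _ => ?_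
  rw [← rpow_natCast, ← rpow_mul (Nat.cast_nonneg p), mul_comm]

theorem card_divisors_le_mul_rpow {ε : ℝ} (hε : 0 < ε) :
    ∃ C : ℝ, 0 < C ∧ ∀ m : ℕ, m ≠ 0 → (#m.divisors : ℝ) ≤ C * (m : ℝ) ^ ε := by
  set K := 1 + (ε * log 2)⁻¹
  have hK : 1 ≤ K := le_add_of_nonneg_right (inv_nonneg.2 (mul_pos hε (log_pos one_lt_two)).le)
  set N := ⌈(2 : ℝ) ^ ε⁻¹⌉₊
  refine ⟨K ^ N, by positivity, fun m hm => ?_⟩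
  have small_primes : #(m.primeFactors.filter fun p : ℕ => (p : ℝ) ^ ε < 2) ≤ N := by
    refine (card_le_card fun p hp => ?_).trans (card_range N).le
    exact mem_range.2 <| Nat.lt_ceil.2 <|
      (lt_rpow_inv_iff_of_pos (Nat.cast_nonneg p) zero_le_two hε).2 (mem_filter.1 hp).2
  rw [Nat.card_divisors hm, rpow_eq_prod_primeFactors hm]
  push_cast
  calc ∏ p ∈ m.primeFactors, ((m.factorization p : ℝ) + 1)
      ≤ ∏ p ∈ m.primeFactors,
          (if (p : ℝ) ^ ε < 2 then K else 1) * (p : ℝ) ^ (ε * m.factorization p) :=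
        prod_le_prod (fun _ _ => by positivity) fun p hp =>
          add_one_le_mul_rpow hε (by exact_mod_cast (Nat.prime_of_mem_primeFactors hp).two_le) _
    _ = (∏ p ∈ m.primeFactors, if (p : ℝ) ^ ε < 2 then K else 1) *
          ∏ p ∈ m.primeFactors, (p : ℝ) ^ (ε * m.factorization p) := prod_mul_distrib
    _ ≤ K ^ N * ∏ p ∈ m.primeFactors, (p : ℝ) ^ (ε * m.factorization p) := by
        gcongr
        rw [prod_ite, prod_const, prod_const_one, mul_one]
        exact pow_le_pow_right₀ hK small_primes

lemma card_filter_natCast_dvd_le (A : Finset ℕ) {s : ℤ} (hs : s ≠ 0) :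
    #(A.filter fun d : ℕ => (d : ℤ) ∣ s) ≤ #s.natAbs.divisors :=
  card_le_card fun _ hd =>
    Nat.mem_divisors.2 ⟨Int.natCast_dvd.1 (mem_filter.1 hd).2, Int.natAbs_ne_zero.2 hs⟩

lemma card_filter_dvd_le_of_card_divisors_le {C ε : ℝ} (hC : 0 ≤ C) (hε : 0 ≤ ε)
    (hdiv : ∀ m : ℕ, m ≠ 0 → (#m.divisors : ℝ) ≤ C * (m : ℝ) ^ ε) (A : Finset ℕ) {s : ℤ}
    {M : ℕ} (hs : 0 < s) (hsM : s ≤ M) :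
    (#(A.filter fun d : ℕ => (d : ℤ) ∣ s) : ℝ) ≤ C * (M : ℝ) ^ ε := by
  have hsM' : s.natAbs ≤ M := Int.ofNat_le.1 (by rwa [Int.natAbs_of_nonneg hs.le])
  calc (#(A.filter fun d : ℕ => (d : ℤ) ∣ s) : ℝ) ≤ #s.natAbs.divisors := by
        exact_mod_cast card_filter_natCast_dvd_le A hs.ne'
    _ ≤ C * (s.natAbs : ℝ) ^ ε := hdiv _ (by omega)
    _ ≤ C * (M : ℝ) ^ ε := by gcongr

section Height

variable {n : ℕ}

lemma natAbs_le_vecHeight (x : Fin n → ℤ) (i : Fin n) : (x i).natAbs ≤ vecHeight x :=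
  le_sup (f := fun i => (x i).natAbs) (mem_univ i)

lemma vecHeight_le_iff {x : Fin n → ℤ} {h : ℕ} : vecHeight x ≤ h ↔ ∀ i, (x i).natAbs ≤ h := by
  simp [vecHeight, Finset.sup_le_iff]

lemma Ucount_eq_card_filter (a : Fin n → ℤ) (h d : ℕ) :
    Ucount a h d = #((Fintype.piFinset fun _ => Icc (1 : ℤ) h).filter
      fun x => (d : ℤ) ∣ ∑ i, a i * x i) := by
  rw [Ucount, ← Nat.card_eq_finsetCard]
  refine Nat.card_congr (Equiv.subtypeEquivRight fun x => ?_)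
  simp only [mem_filter, Fintype.mem_piFinset, mem_Icc, vecHeight_le_iff, ← and_assoc,
    ← forall_and]
  exact and_congr_left' (forall_congr' fun i => by omega)

lemma sum_mul_pos_of_mem_piFinset [NeZero n] {a x : Fin n → ℤ} (ha : ∀ i, 0 < a i) {h : ℕ}
    (hx : x ∈ Fintype.piFinset fun _ => Icc (1 : ℤ) h) : 0 < ∑ i, a i * x i :=
  sum_pos (fun i _ => mul_pos (ha i) (mem_Icc.1 (Fintype.mem_piFinset.1 hx i)).1)
    univ_nonempty

lemma sum_mul_le_of_mem_piFinset {a x : Fin n → ℤ} {h : ℕ}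
    (hx : x ∈ Fintype.piFinset fun _ => Icc (1 : ℤ) h) :
    ∑ i, a i * x i ≤ n * h * vecHeight a := by
  have hterm : ∀ i ∈ univ, a i * x i ≤ vecHeight a * h := fun i _ => by
    have hxi := mem_Icc.1 (Fintype.mem_piFinset.1 hx i)
    have hai := natAbs_le_vecHeight a i
    exact mul_le_mul (by omega) hxi.2 (by omega) (by positivity)
  calc ∑ i, a i * x i ≤ #(univ : Finset (Fin n)) • ((vecHeight a : ℤ) * h) :=
        sum_le_card_nsmul _ _ _ hterm
    _ = n * h * vecHeight a := by simp; ring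

end Height

/-- Divisor-function bound on the tail: for `n ≥ 2` and `ε > 0` there is `C > 0`
(depending only on `n` and `ε`) such that `∑_{d > D} U_d(a, h) ≤ C·hⁿ·(h·𝔥(a))^ε`
(the sum runs over integers `D < d ≤ n·h·𝔥(a)`; `U_d(a,h) = 0` beyond that range). -/
theorem sum_Ucount_tail (n : ℕ) (hn : 2 ≤ n) (ε : ℝ) (hε : 0 < ε) :
    ∃ C : ℝ, 0 < C ∧
      ∀ a : Fin n → ℤ, (∀ i, 0 < a i) → ∀ h : ℕ, 2 ≤ h → ∀ D : ℝ, 1 ≤ D →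
        ∑ d ∈ (Finset.Icc 1 (n * h * vecHeight a)).filter (fun d : ℕ => D < (d : ℝ)),
            (Ucount a h d : ℝ)
          ≤ C * (h : ℝ) ^ n * ((h : ℝ) * (vecHeight a : ℝ)) ^ ε := by
  have : NeZero n := ⟨by omega⟩
  obtain ⟨C, hC, hdiv⟩ := card_divisors_le_mul_rpow hε
  refine ⟨C * n ^ ε, by positivity, fun a ha h _ D _ => ?_⟩
  set box := Fintype.piFinset fun _ : Fin n => Icc (1 : ℤ) h
  set A := (Icc 1 (n * h * vecHeight a)).filter fun d : ℕ => D < d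
  calc ∑ d ∈ A, (Ucount a h d : ℝ)
      = ∑ x ∈ box, (#(A.filter fun d : ℕ => (d : ℤ) ∣ ∑ i, a i * x i) : ℝ) := by
        simp_rw [Ucount_eq_card_filter, card_filter]
        push_cast
        exact sum_comm
    _ ≤ ∑ x ∈ box, C * ((n * h * vecHeight a : ℕ) : ℝ) ^ ε :=
        sum_le_sum fun x hx => card_filter_dvd_le_of_card_divisors_le hC.le hε.le hdiv A
          (sum_mul_pos_of_mem_piFinset ha hx) (by exact_mod_cast sum_mul_le_of_mem_piFinset hx)
    _ = C * n ^ ε * h ^ n * (h * vecHeight a) ^ ε := by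
        rw [sum_const, Fintype.card_piFinset_const, Int.card_Icc, add_sub_cancel_right,
          Int.toNat_natCast, nsmul_eq_mul, Nat.cast_mul, Nat.cast_mul, mul_assoc (n : ℝ),
          mul_rpow (by positivity) (by positivity)]
        push_cast
        ring
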